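/- Let q be a prime power, n ≥ 3, and let F ∈ F_q[x₀,…,x_n] be a cubic form that is singular at the point (0:⋯:0:1), i.e., F = x_n·f₂(x₀,…,x_{n−1}) + f₃(x₀,…,x_{n−1}) with f₂, f₃ homogeneous of degrees 2 and 3 (possibly f₂ = 0). Then |Z(F)(F_q)| ≡ 1 (mod q). -/

import Mathlib

/-!
The affine cone over `Z(F)` has `1 + (q - 1) · #Z(F)(F_q)` points, so it suffices that `q` divides
the number of affine zeros of `F = t · f₂(z) + f₃(z)`. For fixed `z` this equation is linear in `t`:
it has exactly one solution when `f₂(z) ≠ 0` and none or `q` otherwise, so the count is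
`#{f₂ ≠ 0} = q ^ n - #{f₂ = 0}` modulo `q`.

It remains that `q` divides the number of zeros of a quadratic form `Q` in at least three variables.
Chevalley–Warning gives an isotropic `w ≠ 0`, and then `Q (x + t • w) = Q x + t * B x w` with `B`
the polar form. The zeros with `B x w = 0` are unions of lines in direction `w`; every other line in
direction `w` contains exactly one zero, so these zeros are counted by the points of a hyperplane
`H` transversal to `w` with `B x w ≠ 0`, that is by `#H` minus the size of a subspace of
codimension at most two, which is nonzero because there are at least three variables.
-/

open MvPolynomial Module

theorem MvPolynomial.IsHomogeneous.eval_smul {R σ : Type*} [CommSemiring R]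
    {f : MvPolynomial σ R} {k : ℕ} (hf : f.IsHomogeneous k) (c : R) (y : σ → R) :
    eval (c • y) f = c ^ k * eval y f := by
  simp only [eval_eq, Finset.mul_sum, Pi.smul_apply, smul_eq_mul, mul_pow,
    Finset.prod_mul_distrib, Finset.prod_pow_eq_pow_sum]
  refine Finset.sum_congr rfl fun d hd => ?_
  have hdeg : ∑ i ∈ d.support, d i = k := by
    rw [← hf (mem_support_iff.mp hd), Finsupp.weight_apply, Finsupp.sum]
    simp
  rw [hdeg]
  ring

theorem MvPolynomial.IsHomogeneous.eval_zero {R σ : Type*} [CommSemiring R]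
    {f : MvPolynomial σ R} {k : ℕ} (hf : f.IsHomogeneous k) (hk : k ≠ 0) : eval 0 f = 0 := by
  simpa [zero_pow hk] using hf.eval_smul 0 0

open Pointwise in
theorem MvPolynomial.IsHomogeneous.exists_quadraticMap {R σ : Type*} [CommSemiring R]
    {f : MvPolynomial σ R} (hf : f.IsHomogeneous 2) :
    ∃ Q : QuadraticMap R (σ → R) R, ∀ y, Q y = eval y f := by
  have hmem : f ∈ Submodule.span R
      (Set.range (X : σ → MvPolynomial σ R) * Set.range (X : σ → MvPolynomial σ R)) := by
    rw [← Submodule.span_mul_span, ← homogeneousSubmodule_one_eq_span_X, ← pow_two,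
      homogeneousSubmodule_one_pow]
    exact hf
  clear hf
  induction hmem using Submodule.span_induction with
  | mem g hg =>
    obtain ⟨_, ⟨i, rfl⟩, _, ⟨j, rfl⟩, rfl⟩ := hg
    exact ⟨QuadraticMap.proj i j, fun y => by simp⟩
  | zero => exact ⟨0, by simp⟩
  | add g h _ _ hg hh =>
    obtain ⟨Q, hQ⟩ := hg
    obtain ⟨Q', hQ'⟩ := hh
    exact ⟨Q + Q', by simp [hQ, hQ']⟩
  | smul c g _ hg =>
    obtain ⟨Q, hQ⟩ := hg
    exact ⟨c • Q, by simp [hQ]⟩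

section FiniteField

variable {K : Type*} [Field K]

theorem MvPolynomial.exists_ne_zero_eval_eq_zero_of_totalDegree_lt [Fintype K] {σ : Type*}
    [Fintype σ] {f : MvPolynomial σ K} (h : f.totalDegree < Fintype.card σ)
    (h0 : eval 0 f = 0) : ∃ x ≠ 0, eval x f = 0 := by
  classical
  have : Fact (ringChar K).Prime := ⟨CharP.char_is_prime K _⟩
  have hcard : 1 < Fintype.card {x : σ → K // eval x f = 0} :=
    (Fact.out : (ringChar K).Prime).one_lt.trans_le <|
      Nat.le_of_dvd (Fintype.card_pos_iff.mpr ⟨⟨0, h0⟩⟩) (char_dvd_card_solutions _ h)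
  obtain ⟨⟨x, hx⟩, hne⟩ := Fintype.exists_ne_of_one_lt_card hcard ⟨0, h0⟩
  exact ⟨x, fun h => hne (Subtype.ext h), hx⟩

variable {V : Type*} [AddCommGroup V] [Module K V]

theorem Set.natCard_dvd_of_add_smul_mem {S : Set V} {w : V} (hw : w ≠ 0)
    (hS : ∀ x ∈ S, ∀ t : K, x + t • w ∈ S) : Nat.card K ∣ Nat.card S := by
  obtain ⟨φ, hφw⟩ := Projective.exists_dual_eq_one K hw
  let e : S ≃ {x ∈ S | φ x = 0} × K :=
    { toFun x := (⟨x + (-φ x) • w, hS _ x.2 _, by simp [hφw]⟩, φ x)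
      invFun p := ⟨p.1 + p.2 • w, hS _ p.1.2.1 _⟩
      left_inv x := by ext; simp
      right_inv p := by
        have : φ p.1 = 0 := p.1.2.2
        ext <;> simp [this, hφw] }
  rw [Nat.card_congr e, Nat.card_prod]
  exact dvd_mul_left _ _

theorem natCard_zeros_eq_natCard_ker_of_add_smul {g ℓ : V → K} {φ : Dual K V} {w : V}
    (hφw : φ w = 1) (hg : ∀ x (t : K), g (x + t • w) = g x + t * ℓ x)
    (hℓ : ∀ x (t : K), ℓ (x + t • w) = ℓ x) :
    Nat.card {x // g x = 0 ∧ ℓ x ≠ 0} = Nat.card {x // φ x = 0 ∧ ℓ x ≠ 0} := by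
  refine Nat.card_congr
    { toFun x := ⟨x + (-φ x) • w, by simp [hφw], by rw [hℓ]; exact x.2.2⟩
      invFun y := ⟨y + (-(g y / ℓ y)) • w, by rw [hg]; field_simp [y.2.2]; ring,
        by rw [hℓ]; exact y.2.2⟩
      left_inv x := ?_
      right_inv y := ?_ }
  · obtain ⟨x, hgx, hℓx⟩ := x
    have : g (x + (-φ x) • w) / ℓ (x + (-φ x) • w) = -φ x := by
      rw [hg, hℓ, hgx, zero_add]; field_simp
    ext1
    dsimp only
    rw [this]
    module
  · obtain ⟨y, hφy, hℓy⟩ := y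
    ext1
    simp [hφy, hφw]

theorem QuadraticMap.natCard_dvd_natCard_zeros [Finite V] (Q : QuadraticMap K V K)
    (hV : 3 ≤ finrank K V) {w : V} (hw : w ≠ 0) (hQw : Q w = 0) :
    Nat.card K ∣ Nat.card {x // Q x = 0} := by
  obtain ⟨φ, hφw⟩ := Projective.exists_dual_eq_one K hw
  let ℓ : Dual K V := (polarBilin Q).flip w
  have hℓw : ℓ w = 0 := by simp [ℓ, polar_self, hQw]
  have hQ_line (x : V) (t : K) : Q (x + t • w) = Q x + t * ℓ x := by
    rw [QuadraticMap.map_add (⇑Q), Q.map_smul, hQw, polar_smul_right]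
    simp [ℓ]
  have hℓ_line (x : V) (t : K) : ℓ (x + t • w) = ℓ x := by simp [hℓw]
  obtain ⟨u, hu, hφu, hℓu⟩ : ∃ u ≠ 0, φ u = 0 ∧ ℓ u = 0 := by
    have : finrank K (K × K) < finrank K V := by simp; omega
    obtain ⟨u, hu, hu0⟩ := Submodule.exists_mem_ne_zero_of_ne_bot
      (LinearMap.ker_ne_bot_of_finrank_lt (f := φ.prod ℓ) this)
    exact ⟨u, hu0, by simpa using hu⟩
  set Z := {x | Q x = 0}
  set L := {x | ℓ x = 0}
  set H := {x | φ x = 0}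
  have hZL : Nat.card K ∣ Nat.card ↥(Z ∩ L) :=
    Set.natCard_dvd_of_add_smul_mem hw fun x hx t => by simp_all [Z, L]
  have hH : Nat.card K ∣ Nat.card H :=
    Set.natCard_dvd_of_add_smul_mem hu fun x hx t => by simp_all [H]
  have hHL : Nat.card K ∣ Nat.card ↥(H ∩ L) :=
    Set.natCard_dvd_of_add_smul_mem hu fun x hx t => by simp_all [H, L]
  have hZ := Set.ncard_inter_add_ncard_sdiff_eq_ncard Z L
  have hH' := Set.ncard_inter_add_ncard_sdiff_eq_ncard H L
  simp only [← Nat.card_coe_set_eq] at hZ hH'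
  show Nat.card K ∣ Nat.card Z
  rw [← hZ, show Nat.card ↥(Z \ L) = Nat.card ↥(H \ L) from
    natCard_zeros_eq_natCard_ker_of_add_smul hφw hQ_line hℓ_line]
  rw [← hH'] at hH
  exact dvd_add hZL ((Nat.dvd_add_right hHL).mp hH)

theorem MvPolynomial.IsHomogeneous.natCard_dvd_natCard_zeros_of_two [Fintype K] {σ : Type*}
    [Fintype σ] {f : MvPolynomial σ K} (hf : f.IsHomogeneous 2) (hσ : 3 ≤ Fintype.card σ) :
    Nat.card K ∣ Nat.card {x : σ → K // eval x f = 0} := by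
  obtain ⟨Q, hQ⟩ := hf.exists_quadraticMap
  obtain ⟨w, hw, hfw⟩ := exists_ne_zero_eval_eq_zero_of_totalDegree_lt
    (hf.totalDegree_le.trans_lt (by omega)) (hf.eval_zero two_ne_zero)
  simp_rw [← hQ] at hfw ⊢
  exact Q.natCard_dvd_natCard_zeros (by simpa using hσ) hw hfw

theorem natCard_dvd_natCard_linear_zeros {α : Type*} [Finite K] [Finite α] (a b : α → K)
    (hα : Nat.card K ∣ Nat.card α) (ha : Nat.card K ∣ Nat.card {v // a v = 0}) :
    Nat.card K ∣ Nat.card {p : α × K // p.2 * a p.1 + b p.1 = 0} := by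
  classical
  set Z := {p : α × K | p.2 * a p.1 + b p.1 = 0}
  set A := {p : α × K | a p.1 = 0}
  have hZA : Nat.card ↥(Z ∩ A) = Nat.card {v // a v = 0 ∧ b v = 0} * Nat.card K := by
    rw [← Nat.card_prod]
    refine Nat.card_congr (.trans (.subtypeEquivRight fun p => ?_) .prodSubtypeFstEquivSubtypeProd)
    simp only [Z, A, Set.mem_inter_iff, Set.mem_ofPred_eq]
    constructor <;> rintro ⟨h₁, h₂⟩ <;> simp_all
  have hZA' : Nat.card ↥(Z \ A) = Nat.card {v // a v ≠ 0} :=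
    Nat.card_congr
      { toFun p := ⟨p.1.1, p.2.2⟩
        invFun v := ⟨(v, -b v / a v), by
          show -b v / a v * a v + b v = 0
          rw [div_mul_cancel₀ _ v.2, neg_add_cancel], v.2⟩
        left_inv p := by
          obtain ⟨⟨v, t⟩, hZ, hA⟩ := p
          have hA : a v ≠ 0 := hA
          have hZ : t * a v + b v = 0 := hZ
          ext
          · rfl
          · show -b v / a v = t
            field_simp
            linear_combination -hZ
        right_inv v := rfl }
  have hα' : Nat.card {v // a v = 0} + Nat.card {v // a v ≠ 0} = Nat.card α := by
    rw [← Nat.card_sum]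
    exact Nat.card_congr (Equiv.sumCompl _)
  have hZ := Set.ncard_inter_add_ncard_sdiff_eq_ncard Z A
  simp only [← Nat.card_coe_set_eq] at hZ
  show Nat.card K ∣ Nat.card Z
  rw [← hZ, hZA, hZA']
  rw [← hα'] at hα
  exact dvd_add (dvd_mul_left _ _) ((Nat.dvd_add_right ha).mp hα)

theorem Projectivization.natCard_subtype_eq_natCard_rep_mul_add_one [Finite V] {P : V → Prop}
    (hP : ∀ (c : Kˣ) v, P (c • v) ↔ P v) (h0 : P 0) :
    Nat.card {v // P v} =
      Nat.card {x : Projectivization K V // P x.rep} * (Nat.card K - 1) + 1 := by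
  have hne : Nat.card {v // v ≠ 0 ∧ P v} =
      Nat.card {x : Projectivization K V // P x.rep} * Nat.card Kˣ := by
    rw [← Nat.card_prod]
    refine Nat.card_congr <| (Equiv.subtypeSubtypeEquivSubtypeInter _ P).symm.trans <|
      ((nonZeroEquivProjectivizationProdUnits K V).subtypeEquiv fun v => ?_).trans
      Equiv.prodSubtypeFstEquivSubtypeProd
    obtain ⟨c, hc⟩ := exists_smul_eq_mk_rep K v.1 v.2
    rw [← hP c]
    exact Iff.of_eq (congrArg P hc)
  have hins : {v | P v} = insert 0 {v | v ≠ 0 ∧ P v} := by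
    ext v
    by_cases hv : v = 0 <;> simp [hv, h0]
  rw [Nat.card_units] at hne
  rw [← hne]
  show Set.ncard {v | P v} = Set.ncard {v | v ≠ 0 ∧ P v} + 1
  rw [hins, Set.ncard_insert_of_notMem (by simp)]

end FiniteField

theorem Nat.modEq_one_of_dvd_mul_sub_one_add_one {q N : ℕ} (h : q ∣ N * (q - 1) + 1) :
    N ≡ 1 [MOD q] := by
  rcases q.eq_zero_or_pos with rfl | hq
  · simp at h
  rw [← ZMod.natCast_eq_natCast_iff, ← ZMod.natCast_eq_zero_iff] at *
  push_cast [Nat.cast_sub hq, ZMod.natCast_self] at h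
  linear_combination -h

/-- A cubic hypersurface in ℙ^n (n ≥ 3) over F_q singular at (0:⋯:0:1), i.e. with
equation F = xₙ·f₂(x₀,…,x_{n-1}) + f₃(x₀,…,x_{n-1}), has ≡ 1 mod q points. -/
theorem singular_cubic_count {K : Type} [Field K] [Fintype K] {q n : ℕ}
    (hq : Fintype.card K = q) (hn : 3 ≤ n)
    (f₂ f₃ : MvPolynomial (Fin n) K)
    (h₂ : f₂.IsHomogeneous 2) (h₃ : f₃.IsHomogeneous 3) :
    Nat.card {x : Projectivization K (Fin (n + 1) → K) //
      eval x.rep (X (Fin.last n) * rename Fin.castSucc f₂ + rename Fin.castSucc f₃) = 0}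
      ≡ 1 [MOD q] := by
  set F := X (Fin.last n) * rename Fin.castSucc f₂ + rename Fin.castSucc f₃
  have hF : F.IsHomogeneous 3 :=
    ((isHomogeneous_X K _).mul h₂.rename_isHomogeneous).add h₃.rename_isHomogeneous
  have hF_snoc (z : Fin n → K) (t : K) :
      eval (Fin.snoc z t) F = t * eval z f₂ + eval z f₃ := by
    simp [F, eval_rename, Function.comp_def]
  have hF_smul (c : Kˣ) (y : Fin (n + 1) → K) : eval (c • y) F = 0 ↔ eval y F = 0 := by
    rw [Units.smul_def, hF.eval_smul, mul_eq_zero, or_iff_right (pow_ne_zero _ c.ne_zero)]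
  have h_affine : Nat.card {y // eval y F = 0} =
      Nat.card {p : (Fin n → K) × K // p.2 * eval p.1 f₂ + eval p.1 f₃ = 0} :=
    Nat.card_congr (((Equiv.prodComm _ _).trans (Fin.snocEquiv fun _ => K)).subtypeEquiv
      fun p => by rw [← hF_snoc]; rfl).symm
  rw [← hq, ← Nat.card_eq_fintype_card]
  apply Nat.modEq_one_of_dvd_mul_sub_one_add_one
  rw [← Projectivization.natCard_subtype_eq_natCard_rep_mul_add_one
      (P := fun y => eval y F = 0) hF_smul (hF.eval_zero three_ne_zero), h_affine]
  exact natCard_dvd_natCard_linear_zeros (eval · f₂) (eval · f₃)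
    (by simp [dvd_pow_self _ (show n ≠ 0 by omega)])
    (h₂.natCard_dvd_natCard_zeros_of_two (by simpa))
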